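/- For every integer x ≥ 1, M(x) = G⁻¹(x) + ∑_{k=1}^{⌊x/2⌋} G⁻¹(k) · ( π(⌊x/k⌋) − π(⌊x/(k+1)⌋) ), where π(y) is the number of primes not exceeding y. -/

import Mathlib

/-!
Let `χ` be the indicator function of the primes. Since `ω = χ * ζ`, we have `g = (χ + 1) * ζ`,
hence `μ = μ * g * g⁻¹ = (χ + 1) * g⁻¹` and
`M(x) = G⁻¹(x) + ∑_{n ≤ x} g⁻¹(n) π(⌊x/n⌋)`. The terms with `n > x/2` vanish because then
`⌊x/n⌋ ≤ 1`, and summation by parts against the partial sums `G⁻¹(k)` gives the formula; the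
boundary term contains `π(⌊x/(⌊x/2⌋+1)⌋) = 0`.
-/

open ArithmeticFunction Finset
open scoped ArithmeticFunction.zeta ArithmeticFunction.omega ArithmeticFunction.Moebius

theorem Finset.sum_Ioc_mul_by_parts {R : Type*} [CommRing R] (a P : ℕ → R) (K : ℕ) :
    ∑ n ∈ Ioc 0 K, a n * P n =
      ∑ k ∈ Ioc 0 K, (∑ n ∈ Ioc 0 k, a n) * (P k - P (k + 1)) +
        (∑ n ∈ Ioc 0 K, a n) * P (K + 1) := by
  induction K with
  | zero => simp
  | succ K ih =>
    simp only [sum_Ioc_succ_top (Nat.zero_le K), ih]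
    ring

theorem Nat.primeCounting_div_eq_zero {x k : ℕ} (hk : x / 2 < k) : (x / k).primeCounting = 0 :=
  Nat.primeCounting_eq_zero_iff.mpr <| Nat.lt_succ_iff.mp <|
    (Nat.div_lt_iff_lt_mul (by omega)).mpr (by omega)

namespace ArithmeticFunction

def primeIndicator : ArithmeticFunction ℕ :=
  ⟨fun n => if n.Prime then 1 else 0, by simp [Nat.not_prime_zero]⟩

theorem primeIndicator_apply (n : ℕ) : primeIndicator n = if n.Prime then 1 else 0 := rfl

theorem primeIndicator_mul_zeta : primeIndicator * ζ = ω := by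
  ext n
  rw [mul_zeta_apply, cardDistinctFactors_apply, ← List.card_toFinset, ← Nat.primeFactors,
    Nat.primeFactors_eq_to_filter_divisors_prime]
  simp [primeIndicator_apply, sum_boole]

theorem sum_Ioc_primeIndicator (N : ℕ) :
    ∑ n ∈ Ioc 0 N, primeIndicator n = N.primeCounting := by
  rw [← Nat.primesLE_card_eq_primeCounting]
  simp only [primeIndicator_apply, sum_boole, Nat.cast_id]
  congr 1
  ext p
  simp only [mem_filter, mem_Ioc, Nat.mem_primesLE]
  exact ⟨fun h => ⟨h.1.2, h.2⟩, fun h => ⟨⟨h.2.pos, h.1⟩, h.2⟩⟩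

theorem sum_Ioc_coe_primeIndicator {R : Type*} [AddCommMonoidWithOne R] (N : ℕ) :
    ∑ n ∈ Ioc 0 N, (primeIndicator : ArithmeticFunction R) n = N.primeCounting := by
  simp only [natCoe_apply, ← Nat.cast_sum, sum_Ioc_primeIndicator]

theorem sum_Ioc_mul_coe_primeIndicator {R : Type*} [CommSemiring R]
    (a : ArithmeticFunction R) (x : ℕ) :
    ∑ n ∈ Ioc 0 x, (a * primeIndicator) n =
      ∑ n ∈ Ioc 0 (x / 2), a n * (x / n).primeCounting := by
  simp only [sum_Ioc_mul_eq_sum_sum, sum_Ioc_coe_primeIndicator]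
  refine (sum_subset (Ioc_subset_Ioc_right (Nat.div_le_self x 2)) fun n hnx hn => ?_).symm
  rw [mem_Ioc] at hnx hn
  rw [Nat.primeCounting_div_eq_zero (by omega), Nat.cast_zero, mul_zero]

theorem eq_coe_primeIndicator_add_one_mul_zeta {R : Type*} [Semiring R]
    (g : ArithmeticFunction R) (hg : ∀ n : ℕ, 0 < n → g n = (ω n : R) + 1) :
    g = (primeIndicator + 1) * ζ := by
  ext n
  rcases Nat.eq_zero_or_pos n with rfl | hn
  · simp
  rw [add_mul, one_mul, ← natCoe_mul, primeIndicator_mul_zeta, add_apply, natCoe_apply,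
    natCoe_apply, zeta_apply_ne hn.ne', hg n hn, Nat.cast_one]

end ArithmeticFunction

theorem stmt_14_general (g ginv : ArithmeticFunction ℝ)
    (hg : ∀ n : ℕ, 0 < n → g n = (ArithmeticFunction.cardDistinctFactors n : ℝ) + 1)
    (hginv : g * ginv = 1) (x : ℕ) :
    ((∑ n ∈ Finset.Icc 1 x, ArithmeticFunction.moebius n : ℤ) : ℝ) =
      (∑ n ∈ Finset.Icc 1 x, ginv n) +
        ∑ k ∈ Finset.Icc 1 (x / 2),
          (∑ n ∈ Finset.Icc 1 k, ginv n) *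
            ((Nat.primeCounting (x / k) : ℝ) - (Nat.primeCounting (x / (k + 1)) : ℝ)) := by
  have hμ : (μ : ArithmeticFunction ℝ) = ginv + ginv * primeIndicator :=
    calc (μ : ArithmeticFunction ℝ) = μ * (g * ginv) := by rw [hginv, mul_one]
      _ = (μ * ζ) * ((primeIndicator + 1) * ginv) := by
        rw [eq_coe_primeIndicator_add_one_mul_zeta g hg]; ring
      _ = ginv + ginv * primeIndicator := by
        rw [coe_moebius_mul_coe_zeta, one_mul]; ring
  have hπ : (x / (x / 2 + 1)).primeCounting = 0 := Nat.primeCounting_div_eq_zero (by omega)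
  simp only [show ∀ n, Icc 1 n = Ioc 0 n from Icc_add_one_left_eq_Ioc 0]
  calc ((∑ n ∈ Ioc 0 x, μ n : ℤ) : ℝ)
      = ∑ n ∈ Ioc 0 x, ginv n + ∑ n ∈ Ioc 0 x, (ginv * primeIndicator) n := by
        rw [← sum_add_distrib, Int.cast_sum]
        refine sum_congr rfl fun n _ => ?_
        rw [← ArithmeticFunction.add_apply, ← hμ, intCoe_apply]
    _ = ∑ n ∈ Ioc 0 x, ginv n + ∑ n ∈ Ioc 0 (x / 2), ginv n * (x / n).primeCounting := by
        rw [sum_Ioc_mul_coe_primeIndicator]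
    _ = _ := by
      rw [sum_Ioc_mul_by_parts, hπ, Nat.cast_zero, mul_zero, add_zero]

/-- Let `g` be the arithmetic function with `g(n) = ω(n) + 1` for `n ≥ 1`,
let `ginv` be its Dirichlet inverse (characterized by `g * ginv = 1`), and let
`G⁻¹(x) = ∑_{n ≤ x} ginv(n)`.  Then for every `x ≥ 1`,
`M(x) = G⁻¹(x) + ∑_{k=1}^{⌊x/2⌋} G⁻¹(k) (π(⌊x/k⌋) − π(⌊x/(k+1)⌋))`, where `M` is the
Mertens function and `π` the prime counting function. -/
theorem stmt_14 (g ginv : ArithmeticFunction ℝ)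
    (hg : ∀ n : ℕ, 0 < n → g n = (ArithmeticFunction.cardDistinctFactors n : ℝ) + 1)
    (hginv : g * ginv = 1) (x : ℕ) (hx : 1 ≤ x) :
    ((∑ n ∈ Finset.Icc 1 x, ArithmeticFunction.moebius n : ℤ) : ℝ) =
      (∑ n ∈ Finset.Icc 1 x, ginv n) +
        ∑ k ∈ Finset.Icc 1 (x / 2),
          (∑ n ∈ Finset.Icc 1 k, ginv n) *
            ((Nat.primeCounting (x / k) : ℝ) - (Nat.primeCounting (x / (k + 1)) : ℝ)) :=
  stmt_14_general g ginv hg hginv x
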